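/- Let α, β, γ₀ ∈ ℂ, q(z) = z³ + α z² + β z + γ₀, and let R₀ > 0 be such that all zeros of q lie in the open disk |z| < R₀. Suppose g is holomorphic on {z ∈ ℂ : |z| > R₀} and satisfies g(z)² = q(z)/z there, with g(z)/z → 1 as |z| → ∞. Then for every R > R₀, the contour integral of g over the circle |z| = R (traversed counterclockwise) equals −(πi/4)·(α² − 4β). -/

import Mathlib

/-!
Completing the square, `q(z)/z - (z + α/2)² = (β - α²/4) + γ₀/z`, so the holomorphic function
`F(z) = g(z) - (z + α/2)` satisfies `F(z) (g(z) + z + α/2) = (β - α²/4) + γ₀/z` and, since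
`g(z)/z → 1`, `z F(z) → (β - α²/4)/2` at infinity. By Cauchy's theorem on annuli the integral of
`F` over `|z| = r` does not depend on `r > R₀`, while it differs from `2πi c`, `c = (β - α²/4)/2`,
by at most `2π sup_{|z| = r} |z F(z) - c| → 0`. The polynomial `z + α/2` integrates to zero.
-/

open Complex Filter Metric Bornology Topology Real

theorem sphere_zero_subset_setOf_lt_norm {E : Type*} [SeminormedAddGroup E] {R₀ r : ℝ}
    (h : R₀ < r) : sphere (0 : E) r ⊆ {z | R₀ < ‖z‖} := fun z hz => by
  rwa [Set.mem_ofPred_eq, mem_sphere_zero_iff_norm.1 hz]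

section ResidueAtInfinity

variable {F : ℂ → ℂ} {R₀ : ℝ}

theorem circleIntegral_eq_of_differentiableOn_norm_gt (hR₀ : 0 ≤ R₀)
    (hF : DifferentiableOn ℂ F {z | R₀ < ‖z‖}) {R r : ℝ} (hR : R₀ < R) (hRr : R ≤ r) :
    (∮ z in C(0, r), F z) = ∮ z in C(0, R), F z := by
  have hsub : closedBall (0 : ℂ) r \ ball 0 R ⊆ {z | R₀ < ‖z‖} := fun z hz => by
    simp only [Set.mem_sdiff, mem_ball, dist_zero_right, not_lt] at hz
    exact hR.trans_le hz.2
  refine circleIntegral_eq_of_differentiable_on_annulus_off_countable (hR₀.trans_lt hR) hRr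
    Set.countable_empty (hF.continuousOn.mono hsub) fun z hz => hF.differentiableAt ?_
  exact (isOpen_lt continuous_const continuous_norm).mem_nhds
    (hsub ⟨ball_subset_closedBall hz.1.1, fun h => hz.1.2 (ball_subset_closedBall h)⟩)

theorem norm_circleIntegral_sub_two_pi_I_mul_le {c : ℂ} {r ε : ℝ} (hr : 0 < r)
    (hF : CircleIntegrable F 0 r) (hbound : ∀ z ∈ sphere (0 : ℂ) r, ‖z * F z - c‖ ≤ ε) :
    ‖(∮ z in C(0, r), F z) - 2 * π * I * c‖ ≤ 2 * π * ε := by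
  have hinv : (∮ z in C(0, r), c * z⁻¹) = 2 * π * I * c := by
    rw [circleIntegral.integral_const_mul, mul_comm]
    congr 1
    simpa using circleIntegral.integral_sub_inv_of_mem_ball (mem_ball_self (x := (0 : ℂ)) hr)
  have hinvInt : CircleIntegrable (fun z => c * z⁻¹) 0 r :=
    ContinuousOn.circleIntegrable hr.le <| continuousOn_const.mul <|
      continuousOn_id.inv₀ fun z hz => ne_zero_of_mem_sphere hr.ne' ⟨z, hz⟩
  rw [← hinv, ← circleIntegral.integral_sub hF hinvInt]
  calc _ ≤ 2 * π * r * (ε / r) :=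
        circleIntegral.norm_integral_le_of_norm_le_const hr.le fun z hz => ?_
    _ = 2 * π * ε := by field_simp
  have hz0 : z ≠ 0 := ne_zero_of_mem_sphere hr.ne' ⟨z, hz⟩
  rw [show F z - c * z⁻¹ = (z * F z - c) / z by field_simp, norm_div,
    mem_sphere_zero_iff_norm.1 hz]
  gcongr
  exact hbound z hz

theorem circleIntegral_eq_two_pi_I_mul_of_tendsto_mul {c : ℂ} (hR₀ : 0 ≤ R₀)
    (hF : DifferentiableOn ℂ F {z | R₀ < ‖z‖})
    (hlim : Tendsto (fun z => z * F z) (cobounded ℂ) (𝓝 c)) {R : ℝ} (hR : R₀ < R) :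
    (∮ z in C(0, R), F z) = 2 * π * I * c := by
  refine eq_of_forall_dist_le fun ε hε => ?_
  obtain ⟨M, -, hM⟩ := hasBasis_cobounded_norm.eventually_iff.1
    (hlim.eventually (closedBall_mem_nhds c (div_pos hε two_pi_pos)))
  set r := max R M
  have hRr : R ≤ r := le_max_left _ _
  have hr : 0 < r := (hR₀.trans_lt hR).trans_le hRr
  have hFr : CircleIntegrable F 0 r :=
    (hF.continuousOn.mono (sphere_zero_subset_setOf_lt_norm (hR.trans_le hRr))).circleIntegrable
      hr.le
  rw [dist_eq_norm, ← circleIntegral_eq_of_differentiableOn_norm_gt hR₀ hF hR hRr]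
  calc _ ≤ 2 * π * (ε / (2 * π)) :=
        norm_circleIntegral_sub_two_pi_I_mul_le hr hFr fun z hz => ?_
    _ = ε := by field_simp
  rw [← dist_eq_norm]
  exact hM (le_max_right R M |>.trans (mem_sphere_zero_iff_norm.1 hz).ge)

end ResidueAtInfinity

theorem tendsto_mul_sub_of_sq_eq_cubic_div {α β γ₀ : ℂ} {g : ℂ → ℂ}
    (hsq : ∀ᶠ z in cobounded ℂ, g z ^ 2 = (z ^ 3 + α * z ^ 2 + β * z + γ₀) / z)
    (hasymp : Tendsto (fun z => g z / z) (cobounded ℂ) (𝓝 1)) :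
    Tendsto (fun z => z * (g z - (z + α / 2))) (cobounded ℂ) (𝓝 ((β - α ^ 2 / 4) / 2)) := by
  have hinv : Tendsto (fun z : ℂ => z⁻¹) (cobounded ℂ) (𝓝 0) := tendsto_inv₀_cobounded
  have hden : Tendsto (fun z => g z / z + 1 + α / 2 * z⁻¹) (cobounded ℂ) (𝓝 2) := by
    simpa [one_add_one_eq_two] using (hasymp.add_const 1).add (hinv.const_mul (α / 2))
  have hnum : Tendsto (fun z => β - α ^ 2 / 4 + γ₀ * z⁻¹) (cobounded ℂ) (𝓝 (β - α ^ 2 / 4)) := by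
    simpa using (hinv.const_mul γ₀).const_add (β - α ^ 2 / 4)
  refine (hnum.div hden two_ne_zero).congr' ?_
  filter_upwards [hsq, hden.eventually_ne two_ne_zero, eventually_ne_cobounded 0]
    with z hz hd hz0
  rw [Pi.div_apply, div_eq_iff hd]
  have hz1 : z * z⁻¹ = 1 := mul_inv_cancel₀ hz0
  rw [div_eq_mul_inv] at hz ⊢
  linear_combination
    -((g z - (z + α / 2)) * (g z + α / 2) + z ^ 2 + α * z + β) * hz1 - hz

theorem stmt_3 (α β γ₀ : ℂ) (R₀ : ℝ) (hR₀ : 0 < R₀)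
    (g : ℂ → ℂ)
    (hg : DifferentiableOn ℂ g {z : ℂ | R₀ < ‖z‖})
    (hsq : ∀ z : ℂ, R₀ < ‖z‖ →
      g z ^ 2 = (z ^ 3 + α * z ^ 2 + β * z + γ₀) / z)
    (hasymp : Filter.Tendsto (fun z : ℂ => g z / z)
      (Filter.comap (fun z : ℂ => ‖z‖) Filter.atTop) (nhds 1)) :
    ∀ R : ℝ, R₀ < R →
      (∫ θ in (0 : ℝ)..(2 * Real.pi),
          g (R * Complex.exp (θ * Complex.I)) * (Complex.I * R * Complex.exp (θ * Complex.I)))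
        = -(Real.pi * Complex.I / 4) * (α ^ 2 - 4 * β) := by
  intro R hR
  rw [comap_norm_atTop] at hasymp
  have hR0 : 0 < R := hR₀.trans hR
  have hpoly : Differentiable ℂ fun z : ℂ => z + α / 2 := by fun_prop
  have hF : DifferentiableOn ℂ (fun z => g z - (z + α / 2)) {z | R₀ < ‖z‖} :=
    hg.sub hpoly.differentiableOn
  have hlim := tendsto_mul_sub_of_sq_eq_cubic_div
    ((tendsto_norm_cobounded_atTop.eventually_gt_atTop R₀).mono hsq) hasymp
  calc _ = ∮ z in C(0, R), g z := by
        simp only [circleIntegral, deriv_circleMap, circleMap, smul_eq_mul, zero_add]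
        congr 1 with θ
        ring
    _ = (∮ z in C(0, R), (g z - (z + α / 2))) + ∮ z in C(0, R), (z + α / 2) := by
        rw [← circleIntegral.integral_add
          ((hF.continuousOn.mono (sphere_zero_subset_setOf_lt_norm hR)).circleIntegrable hR0.le)
          (hpoly.continuous.continuousOn.circleIntegrable hR0.le)]
        simp
    _ = 2 * π * I * ((β - α ^ 2 / 4) / 2) + 0 := by
        rw [circleIntegral_eq_two_pi_I_mul_of_tendsto_mul hR₀.le hF hlim hR,
          hpoly.diffContOnCl.circleIntegral_eq_zero hR0.le]
    _ = _ := by ring
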